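/- (Corollary on unobserved-location entropy reduction, early columns.) Let 2m+2 ≤ i ≤ n and 1 ≤ t ≤ i−2m−1, and for each j = 1, …, i let x_j be a vector of k distinct locations of column j, with u_j the complementary vector of the remaining r−k locations of column j. Then H(Z_{u_t} | Z_{x_{1:i−m−1}}, Z_{u_{t+1:i}}) − H(Z_{u_t} | Z_{x_{1:i−m−1}}, Z_{u_{t+1:i}}, Z_{x_{i−m}}) ≤ k(r−k) · log(1 + ξ²/(η(1+η))). -/

import Mathlib

open Finset

/-- Covariance matrix of the GP: kernel plus sensor noise on the diagonal. -/
noncomputable def SigmaMat {D : Type*} [DecidableEq D] (K : D → D → ℝ) (σn2 : ℝ) :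
    Matrix D D ℝ :=
  Matrix.of fun x y => K x y + if x = y then σn2 else 0

/-- Submatrix of covariances between the entries of two finsets of locations. -/
noncomputable def subMat {D : Type*} (Cov : Matrix D D ℝ) (a s : Finset D) :
    Matrix ↥a ↥s ℝ :=
  Matrix.of fun p q => Cov p.1 q.1

/-- Posterior covariance `Σ_{aa|s} = Σ_{aa} - Σ_{as} Σ_{ss}⁻¹ Σ_{sa}`. -/
noncomputable def postCov {D : Type*} [DecidableEq D] (Cov : Matrix D D ℝ) (a s : Finset D) :
    Matrix ↥a ↥a ℝ :=
  subMat Cov a a - subMat Cov a s * (subMat Cov s s)⁻¹ * subMat Cov s a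

/-- Gaussian conditional entropy `H(Z_a | Z_s) = (1/2) log((2πe)^{|a|} det Σ_{aa|s})`. -/
noncomputable def condEnt {D : Type*} [DecidableEq D] (Cov : Matrix D D ℝ) (a s : Finset D) : ℝ :=
  (1/2) * Real.log ((2 * Real.pi * Real.exp 1) ^ a.card * (postCov Cov a s).det)

/-- Gaussian joint entropy `H(Z_a)`. -/
noncomputable def ent {D : Type*} [DecidableEq D] (Cov : Matrix D D ℝ) (a : Finset D) : ℝ :=
  condEnt Cov a ∅

/-- Mutual information `I(Z_a ; Z_b) = H(Z_a) - H(Z_a | Z_b)`. -/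
noncomputable def mutInf {D : Type*} [DecidableEq D] (Cov : Matrix D D ℝ) (a b : Finset D) : ℝ :=
  ent Cov a - condEnt Cov a b

/-- Conditional mutual information `I(Z_a ; Z_b | Z_s) = H(Z_a | Z_s) - H(Z_a | Z_s, Z_b)`. -/
noncomputable def condMutInf {D : Type*} [DecidableEq D] (Cov : Matrix D D ℝ)
    (a b s : Finset D) : ℝ :=
  condEnt Cov a s - condEnt Cov a (s ∪ b)

/-- Posterior variance `Σ_{yy|A}` of a single location `y`. -/
noncomputable def postVar {D : Type*} [DecidableEq D] (Cov : Matrix D D ℝ) (y : D)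
    (A : Finset D) : ℝ :=
  postCov Cov {y} A ⟨y, Finset.mem_singleton_self y⟩ ⟨y, Finset.mem_singleton_self y⟩

/-- Concatenation `x_{i:j}` of the column selections from column `i` to column `j`. -/
def seg {D : Type*} [DecidableEq D] (x : ℕ → Finset D) (i j : ℕ) : Finset D :=
  (Finset.Icc i j).biUnion x

/-- The set of the `r` locations of column `i`. -/
def column {D : Type*} [Fintype D] (col : D → ℕ) (i : ℕ) : Finset D :=
  Finset.univ.filter (fun p => col p = i)

/-- The complementary vector `u_i` of unobserved locations of column `i` for a path `x`. -/
def ucomp {D : Type*} [Fintype D] [DecidableEq D] (col : D → ℕ) (x : ℕ → Finset D) :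
    ℕ → Finset D :=
  fun i => column col i \ x i

/-- A path selects, in every column `i = 1,…,n`, a vector of `k` distinct locations of
column `i`. -/
def IsPath {D : Type*} [Fintype D] (col : D → ℕ) (n k : ℕ) (x : ℕ → Finset D) : Prop :=
  ∀ i, 1 ≤ i → i ≤ n → x i ⊆ column col i ∧ (x i).card = k

/-!
The conditional mutual information `I(u; B | A)` is symmetric, so it also measures how much
observing `u` lowers the log-variances of the locations of `B`. By the chain rule for
log-determinants it splits into `|B|` terms, and each of these telescopes into `|u|` single-location
steps. Submodularity bounds the variance drop of each step by the prior reduction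
`K(q,p)² / (σs² + σn²) ≤ σs⁴ξ² / (σs² + σn²)`, and the noise keeps every posterior variance above
`σn²`, so each step changes a log-variance by at most `log (1 + ξ² / (η (1 + η)))`.
-/

open Matrix

section GaussianConditioning

variable {D : Type*} {Cov : Matrix D D ℝ}

theorem fromBlocks_subMat (a s : Finset D) :
    fromBlocks (subMat Cov a a) (subMat Cov a s) (subMat Cov s a) (subMat Cov s s) =
      Cov.submatrix (Sum.elim (↑) (↑)) (Sum.elim (↑) (↑)) := by
  ext (i | i) (j | j) <;> rfl

theorem conjTranspose_subMat (hCov : Cov.IsHermitian) (a s : Finset D) :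
    (subMat Cov a s)ᴴ = subMat Cov s a := by
  ext i j
  simpa [subMat] using congrFun₂ hCov i.1 j.1

theorem subMat_posDef [Fintype D] (hCov : Cov.PosDef) (s : Finset D) :
    (subMat Cov s s).PosDef :=
  hCov.submatrix Subtype.val_injective

variable [DecidableEq D]

theorem det_postCov_singleton (q : D) (S : Finset D) :
    (postCov Cov {q} S).det = postVar Cov q S := by
  rw [det_unique]
  rfl

theorem postVar_empty (q : D) : postVar Cov q ∅ = Cov q q := by
  simp [postVar, postCov, subMat, mul_apply]

theorem postVar_singleton (q p : D) :
    postVar Cov q {p} = Cov q q - Cov q p * Cov p q / Cov p p := by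
  simp [postVar, postCov, subMat, mul_apply, div_eq_mul_inv, mul_right_comm]

theorem sigmaMat_eq (K : D → D → ℝ) (σ : ℝ) : SigmaMat K σ = of K + diagonal fun _ => σ := by
  ext x y
  simp [SigmaMat, diagonal_apply]

theorem posDef_sigmaMat {K : D → D → ℝ} (hK : (of K).PosSemidef) {σ : ℝ} (hσ : 0 < σ) :
    (SigmaMat K σ).PosDef := by
  rw [sigmaMat_eq]
  exact PosDef.posSemidef_add hK (posDef_diagonal_iff.mpr fun _ => hσ)

theorem postVar_sub_postVar_insert_sigmaMat_le {K : D → D → ℝ} {σs2 σn2 c : ℝ}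
    (hKsymm : ∀ p q, K p q = K q p) (hKdiag : ∀ p, K p p = σs2) (hσ : 0 < σs2 + σn2)
    (hsub : ∀ (p q : D) (A : Finset D), p ∉ A → q ∉ A → p ≠ q →
      postVar (SigmaMat K σn2) p A - postVar (SigmaMat K σn2) p (insert q A)
        ≤ postVar (SigmaMat K σn2) p ∅ - postVar (SigmaMat K σn2) p {q})
    {p q : D} {T : Finset D} (hqT : q ∉ T) (hpT : p ∉ T) (hpq : p ≠ q) (hKqp : |K q p| ≤ c) :
    postVar (SigmaMat K σn2) q T - postVar (SigmaMat K σn2) q (insert p T) ≤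
      c ^ 2 / (σs2 + σn2) := by
  refine (hsub q p T hqT hpT hpq.symm).trans ?_
  rw [postVar_empty, postVar_singleton]
  simp only [SigmaMat, of_apply, if_pos, hpq, hpq.symm, if_false, hKdiag, add_zero, hKsymm p q]
  rw [sub_sub_cancel, ← sq, ← sq_abs]
  gcongr

variable [Fintype D]

theorem det_subMat_union (hCov : Cov.PosDef) {a s : Finset D} (hd : Disjoint a s) :
    (subMat Cov (a ∪ s) (a ∪ s)).det = (subMat Cov s s).det * (postCov Cov a s).det := by
  have : Invertible (subMat Cov s s) := (subMat_posDef hCov s).isUnit.invertible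
  let e := Equiv.Finset.union a s hd
  have hreindex : subMat Cov (a ∪ s) (a ∪ s) =
      (fromBlocks (subMat Cov a a) (subMat Cov a s) (subMat Cov s a) (subMat Cov s s)).submatrix
        e.symm e.symm := by
    rw [fromBlocks_subMat]
    ext x y
    obtain ⟨x, rfl⟩ := e.surjective x
    obtain ⟨y, rfl⟩ := e.surjective y
    rcases x with x | x <;> rcases y with y | y <;> simp [e, subMat]
  rw [hreindex, det_submatrix_equiv_self, det_fromBlocks₂₂, invOf_eq_nonsing_inv]
  rfl

theorem det_postCov_pos (hCov : Cov.PosDef) {a s : Finset D} (hd : Disjoint a s) :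
    0 < (postCov Cov a s).det := by
  have hunion := (subMat_posDef hCov (a ∪ s)).det_pos
  rw [det_subMat_union hCov hd] at hunion
  exact pos_of_mul_pos_right hunion (subMat_posDef hCov s).det_pos.le

theorem posSemidef_postCov_sigmaMat_sub {K : D → D → ℝ} (hK : (of K).PosSemidef) {σ : ℝ}
    (hσ : 0 < σ) {a s : Finset D} (hd : Disjoint a s) :
    (postCov (SigmaMat K σ) a s - σ • 1).PosSemidef := by
  set M := SigmaMat K σ
  have hM := posDef_sigmaMat hK hσ
  have hMs := subMat_posDef hM s
  have : Invertible (subMat M s s) := hMs.isUnit.invertible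
  -- Moving the noise of the `a`-block out leaves a positive semidefinite block matrix whose
  -- Schur complement is `postCov - σ • 1`.
  have hblocks : fromBlocks (subMat M a a - σ • 1) (subMat M a s) (subMat M a s)ᴴ (subMat M s s) =
      (of K).submatrix (Sum.elim (↑) (↑)) (Sum.elim (↑) (↑)) +
        diagonal (Sum.elim 0 fun _ => σ) := by
    have hne (i : a) (j : s) : (i : D) ≠ j := fun h => Finset.disjoint_left.mp hd i.2 (h ▸ j.2)
    rw [conjTranspose_subMat hM.1]
    ext (i | i) (j | j) <;>
      simp [M, SigmaMat, subMat, one_apply, diagonal_apply, hne, (hne _ _).symm]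
  have hpsd : (fromBlocks (subMat M a a - σ • 1) (subMat M a s) (subMat M a s)ᴴ
      (subMat M s s)).PosSemidef := by
    rw [hblocks]
    exact (hK.submatrix _).add (posSemidef_diagonal_iff.mpr fun i => by cases i <;> simp [hσ.le])
  rw [PosDef.fromBlocks₂₂ _ _ hMs, conjTranspose_subMat hM.1, sub_right_comm] at hpsd
  exact hpsd

theorem le_postVar_sigmaMat {K : D → D → ℝ} (hK : (of K).PosSemidef) {σ : ℝ} (hσ : 0 < σ)
    {q : D} {S : Finset D} (hq : q ∉ S) : σ ≤ postVar (SigmaMat K σ) q S := by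
  have hpsd := posSemidef_postCov_sigmaMat_sub hK hσ (Finset.disjoint_singleton_left.mpr hq)
  simpa [postVar] using hpsd.diag_nonneg (i := ⟨q, Finset.mem_singleton_self q⟩)

end GaussianConditioning

theorem Real.log_sub_log_le_log_one_add_div {x y σ Δ : ℝ} (hσ : 0 < σ) (hΔ : 0 ≤ Δ) (hx : 0 < x)
    (hy : σ ≤ y) (hxy : x - y ≤ Δ) : Real.log x - Real.log y ≤ Real.log (1 + Δ / σ) := by
  have hy0 : 0 < y := hσ.trans_le hy
  rw [← Real.log_div hx.ne' hy0.ne']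
  refine Real.log_le_log (div_pos hx hy0) ?_
  rw [div_le_iff₀ hy0]
  have : Δ ≤ Δ / σ * y := by
    rw [div_mul_eq_mul_div, le_div_iff₀ hσ]
    exact mul_le_mul_of_nonneg_left hy hΔ
  linarith

section Entropy

variable {D : Type*} [DecidableEq D] {Cov : Matrix D D ℝ}

theorem log_postVar_sub_log_postVar_union_le {σ Δ : ℝ}
    (hfloor : ∀ (q : D) (S : Finset D), q ∉ S → σ ≤ postVar Cov q S) (hσ : 0 < σ) (hΔ : 0 ≤ Δ)
    {q : D} {S u : Finset D} (hqS : q ∉ S) (hqu : q ∉ u) (hd : Disjoint u S)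
    (hdrop : ∀ p ∈ u, ∀ T : Finset D, q ∉ T → p ∉ T →
      postVar Cov q T - postVar Cov q (insert p T) ≤ Δ) :
    Real.log (postVar Cov q S) - Real.log (postVar Cov q (S ∪ u)) ≤
      u.card * Real.log (1 + Δ / σ) := by
  induction u using Finset.induction_on with
  | empty => simp
  | @insert p u hpu ih =>
    have hqSu : q ∉ S ∪ u := by simp_all
    have hpSu : p ∉ S ∪ u := by
      simp [hpu, Finset.disjoint_left.mp hd (Finset.mem_insert_self p u)]
    have hqpSu : q ∉ insert p (S ∪ u) := by simp_all
    have hstep := Real.log_sub_log_le_log_one_add_div hσ hΔ (hσ.trans_le (hfloor q _ hqSu))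
      (hfloor q _ hqpSu) (hdrop p (Finset.mem_insert_self p u) _ hqSu hpSu)
    have := ih (fun h => hqu (Finset.mem_insert_of_mem h)) (hd.mono_left (Finset.subset_insert p u))
      fun p' hp' => hdrop p' (Finset.mem_insert_of_mem hp')
    rw [Finset.union_insert, Finset.card_insert_of_notMem hpu]
    push_cast
    linarith

variable [Fintype D]

noncomputable def logDet (Cov : Matrix D D ℝ) (S : Finset D) : ℝ :=
  Real.log (subMat Cov S S).det

theorem logDet_insert (hCov : Cov.PosDef) {q : D} {S : Finset D} (hq : q ∉ S) :
    logDet Cov (insert q S) = logDet Cov S + Real.log (postVar Cov q S) := by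
  have hd : Disjoint {q} S := Finset.disjoint_singleton_left.mpr hq
  have hpos := det_postCov_pos hCov hd
  rw [det_postCov_singleton] at hpos
  rw [logDet, Finset.insert_eq, det_subMat_union hCov hd, det_postCov_singleton,
    Real.log_mul (subMat_posDef hCov S).det_pos.ne' hpos.ne', logDet]

theorem two_mul_condEnt (hCov : Cov.PosDef) {a s : Finset D} (hd : Disjoint a s) :
    2 * condEnt Cov a s =
      a.card * Real.log (2 * Real.pi * Real.exp 1) + logDet Cov (a ∪ s) - logDet Cov s := by
  rw [condEnt, logDet, logDet, det_subMat_union hCov hd,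
    Real.log_mul (by positivity) (det_postCov_pos hCov hd).ne', Real.log_pow,
    Real.log_mul (subMat_posDef hCov s).det_pos.ne' (det_postCov_pos hCov hd).ne']
  ring

theorem two_mul_condMutInf_insert (hCov : Cov.PosDef) {a b s : Finset D} {q : D}
    (hd : Disjoint a (s ∪ insert q b)) (hq : q ∉ s ∪ b) :
    2 * condMutInf Cov a (insert q b) s = 2 * condMutInf Cov a b s +
      (Real.log (postVar Cov q (s ∪ b)) - Real.log (postVar Cov q (a ∪ (s ∪ b)))) := by
  have has : Disjoint a s := hd.mono_right Finset.subset_union_left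
  have hasb : Disjoint a (s ∪ b) :=
    hd.mono_right (Finset.union_subset_union_right (Finset.subset_insert q b))
  have hqa : q ∉ a := fun h => Finset.disjoint_left.mp hd h (by simp)
  have hq' : q ∉ a ∪ (s ∪ b) := by simp_all
  simp only [condMutInf, mul_sub]
  rw [two_mul_condEnt hCov has, two_mul_condEnt hCov hd, two_mul_condEnt hCov hasb,
    Finset.union_insert, Finset.union_insert, logDet_insert hCov hq, logDet_insert hCov hq']
  ring

theorem two_mul_condMutInf_le {σ Δ : ℝ} (hCov : Cov.PosDef)
    (hfloor : ∀ (q : D) (S : Finset D), q ∉ S → σ ≤ postVar Cov q S) (hσ : 0 < σ) (hΔ : 0 ≤ Δ)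
    {a b s : Finset D} (has : Disjoint a s) (hab : Disjoint a b) (hbs : Disjoint b s)
    (hdrop : ∀ q ∈ b, ∀ p ∈ a, ∀ T : Finset D, q ∉ T → p ∉ T →
      postVar Cov q T - postVar Cov q (insert p T) ≤ Δ) :
    2 * condMutInf Cov a b s ≤ a.card * b.card * Real.log (1 + Δ / σ) := by
  induction b using Finset.induction_on with
  | empty => simp [condMutInf]
  | @insert q b hqb ih =>
    have hqs : q ∉ s := Finset.disjoint_left.mp hbs (Finset.mem_insert_self q b)
    have hqa : q ∉ a := fun h => Finset.disjoint_left.mp hab h (Finset.mem_insert_self q b)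
    have hab' : Disjoint a b := hab.mono_right (Finset.subset_insert q b)
    have hasb : Disjoint a (s ∪ b) := Finset.disjoint_union_right.mpr ⟨has, hab'⟩
    have hq : q ∉ s ∪ b := by simp [hqs, hqb]
    rw [two_mul_condMutInf_insert hCov (Finset.disjoint_union_right.mpr ⟨has, hab⟩) hq,
      Finset.card_insert_of_notMem hqb]
    have hstep := log_postVar_sub_log_postVar_union_le hfloor hσ hΔ hq hqa hasb
      (hdrop q (Finset.mem_insert_self q b))
    rw [Finset.union_comm (s ∪ b) a] at hstep
    have := ih hab' (hbs.mono_left (Finset.subset_insert q b))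
      fun q' hq' => hdrop q' (Finset.mem_insert_of_mem hq')
    push_cast
    linarith

end Entropy

section Columns

variable {D : Type*} [Fintype D] {col : D → ℕ}

theorem mem_column {i : ℕ} {p : D} : p ∈ column col i ↔ col p = i := by
  simp [column]

variable [DecidableEq D]

theorem mem_ucomp {x : ℕ → Finset D} {j : ℕ} {p : D} :
    p ∈ ucomp col x j ↔ col p = j ∧ p ∉ x j := by
  simp [ucomp, mem_column]

theorem card_ucomp {x : ℕ → Finset D} {j : ℕ} (hx : x j ⊆ column col j) :
    (ucomp col x j).card = (column col j).card - (x j).card :=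
  Finset.card_sdiff_of_subset hx

theorem mem_seg_iff {z : ℕ → Finset D} {a b : ℕ} (hz : ∀ j ∈ Finset.Icc a b, z j ⊆ column col j)
    {p : D} : p ∈ seg z a b ↔ col p ∈ Finset.Icc a b ∧ p ∈ z (col p) := by
  constructor
  · intro hp
    obtain ⟨j, hj, hpj⟩ := Finset.mem_biUnion.mp hp
    obtain rfl := mem_column.mp (hz j hj hpj)
    exact ⟨hj, hpj⟩
  · exact fun ⟨hj, hp⟩ => Finset.mem_biUnion.mpr ⟨col p, hj, hp⟩

theorem disjoint_early_column_sets {x : ℕ → Finset D} {i m t : ℕ}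
    (hx : ∀ j, 1 ≤ j → j ≤ i → x j ⊆ column col j) (hti : t < i - m) :
    Disjoint (ucomp col x t) (seg x 1 (i - m - 1) ∪ seg (ucomp col x) (t + 1) i) ∧
      Disjoint (ucomp col x t) (x (i - m)) ∧
      Disjoint (x (i - m)) (seg x 1 (i - m - 1) ∪ seg (ucomp col x) (t + 1) i) := by
  have hmemx (p : D) := mem_seg_iff (p := p) (z := x) (a := 1) (b := i - m - 1) fun j hj =>
    hx j (Finset.mem_Icc.mp hj).1 (by grind)
  have hmemu (p : D) := mem_seg_iff (p := p) (z := ucomp col x) (a := t + 1) (b := i) fun _ _ =>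
    Finset.sdiff_subset
  have hcolx (p : D) (hp : p ∈ x (i - m)) : col p = i - m :=
    mem_column.mp (hx _ (by omega) (by omega) hp)
  simp only [Finset.disjoint_left, Finset.mem_union, hmemx, hmemu, mem_ucomp, Finset.mem_Icc]
  refine ⟨?_, ?_, ?_⟩
  · rintro p ⟨rfl, hpx⟩ (⟨-, hp⟩ | ⟨⟨hlt, -⟩, -⟩)
    exacts [hpx hp, by omega]
  · rintro p ⟨rfl, -⟩ hp
    have := hcolx p hp
    omega
  · rintro p hp (⟨⟨-, hle⟩, -⟩ | ⟨-, -, hpx⟩)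
    · have := hcolx p hp
      omega
    · exact hpx (hcolx p hp ▸ hp)

end Columns

theorem corollary_unobserved_entropy_reduction_early_general
    {D : Type*} [Fintype D] [DecidableEq D]
    (r n k m : ℕ) (col : D → ℕ)
    (K : D → D → ℝ) (σs2 σn2 ξ : ℝ)
    (hkr : k ≤ r)
    (hs : 0 < σs2) (hn : 0 < σn2)
    (hKsymm : ∀ p q : D, K p q = K q p)
    (hKpsd : (Matrix.of K).PosSemidef)
    (hKdiag : ∀ p : D, K p p = σs2)
    (hcolcard : ∀ i : ℕ, 1 ≤ i → i ≤ n → (column col i).card = r)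
    (hdecay : ∀ p q : D, (m : ℤ) + 1 ≤ |(col p : ℤ) - (col q : ℤ)| → |K p q| ≤ σs2 * ξ)
    (hsub : ∀ (p q : D) (A : Finset D), p ∉ A → q ∉ A → p ≠ q →
      postVar (SigmaMat K σn2) p A - postVar (SigmaMat K σn2) p (insert q A)
        ≤ postVar (SigmaMat K σn2) p ∅ - postVar (SigmaMat K σn2) p {q})
    (i t : ℕ) (hi1 : 2 * m + 2 ≤ i) (hi2 : i ≤ n) (ht1 : 1 ≤ t) (ht2 : t ≤ i - 2 * m - 1)
    (x : ℕ → Finset D)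
    (hx : ∀ j : ℕ, 1 ≤ j → j ≤ i → x j ⊆ column col j ∧ (x j).card = k) :
    condEnt (SigmaMat K σn2) (ucomp col x t)
        (seg x 1 (i - m - 1) ∪ seg (ucomp col x) (t + 1) i)
        - condEnt (SigmaMat K σn2) (ucomp col x t)
            ((seg x 1 (i - m - 1) ∪ seg (ucomp col x) (t + 1) i) ∪ x (i - m))
      ≤ (k : ℝ) * ((r : ℝ) - (k : ℝ)) * Real.log (1 + ξ ^ 2 / ((σn2 / σs2) * (1 + σn2 / σs2))) := by
  set Cov := SigmaMat K σn2
  set Δ := (σs2 * ξ) ^ 2 / (σs2 + σn2)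
  have hcols : ∀ j, 1 ≤ j → j ≤ i → x j ⊆ column col j := fun j h1 h2 => (hx j h1 h2).1
  obtain ⟨huA, huB, hBA⟩ := disjoint_early_column_sets hcols (show t < i - m by omega)
  have hdrop : ∀ q ∈ x (i - m), ∀ p ∈ ucomp col x t, ∀ T : Finset D, q ∉ T → p ∉ T →
      postVar Cov q T - postVar Cov q (insert p T) ≤ Δ := by
    intro q hq p hp T hqT hpT
    have hcolq := mem_column.mp (hcols _ (by omega) (by omega) hq)
    have hcolp := (mem_ucomp.mp hp).1
    refine postVar_sub_postVar_insert_sigmaMat_le hKsymm hKdiag (by positivity) hsub hqT hpT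
      (by grind) (hdecay q p ?_)
    rw [hcolq, hcolp]
    exact le_abs.mpr (Or.inl (by omega))
  have hbound := two_mul_condMutInf_le (posDef_sigmaMat hKpsd hn)
    (fun q S hq => le_postVar_sigmaMat hKpsd hn hq) hn (by positivity) huA huB hBA hdrop
  have hratio : Δ / σn2 = ξ ^ 2 / ((σn2 / σs2) * (1 + σn2 / σs2)) := by
    simp only [Δ]
    field_simp
  rw [card_ucomp (hcols t ht1 (by omega)), hcolcard t ht1 (by omega), (hx t ht1 (by omega)).2,
    (hx (i - m) (by omega) (by omega)).2, Nat.cast_sub hkr, hratio] at hbound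
  have hnonneg : 0 ≤ ((r : ℝ) - k) * k * Real.log (1 + ξ ^ 2 / ((σn2 / σs2) * (1 + σn2 / σs2))) :=
    mul_nonneg (mul_nonneg (sub_nonneg.mpr (Nat.cast_le.mpr hkr)) k.cast_nonneg)
      (Real.log_nonneg (le_add_of_nonneg_right (by positivity)))
  change condMutInf Cov _ _ _ ≤ _
  linarith

/-- **Corollary on unobserved-location entropy reduction, early columns.** -/
theorem corollary_unobserved_entropy_reduction_early
    {D : Type*} [Fintype D] [DecidableEq D]
    (r n k m : ℕ) (col : D → ℕ)
    (K : D → D → ℝ) (σs2 σn2 l1 ξ : ℝ)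
    (hr : 1 ≤ r) (hk1 : 1 ≤ k) (hkr : k ≤ r) (hm : 1 ≤ m)
    (hs : 0 < σs2) (hn : 0 < σn2) (hl1 : 0 < l1)
    (hξ : ξ = Real.exp (-((m : ℝ) + 1) ^ 2 / (2 * l1 ^ 2)))
    (hKsymm : ∀ p q : D, K p q = K q p)
    (hKpsd : (Matrix.of K).PosSemidef)
    (hKdiag : ∀ p : D, K p p = σs2)
    (hcol : ∀ p : D, 1 ≤ col p ∧ col p ≤ n)
    (hcolcard : ∀ i : ℕ, 1 ≤ i → i ≤ n → (column col i).card = r)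
    (hdecay : ∀ p q : D, (m : ℤ) + 1 ≤ |(col p : ℤ) - (col q : ℤ)| → |K p q| ≤ σs2 * ξ)
    (hsub : ∀ (p q : D) (A : Finset D), p ∉ A → q ∉ A → p ≠ q →
      postVar (SigmaMat K σn2) p A - postVar (SigmaMat K σn2) p (insert q A)
        ≤ postVar (SigmaMat K σn2) p ∅ - postVar (SigmaMat K σn2) p {q})
    (i t : ℕ) (hi1 : 2 * m + 2 ≤ i) (hi2 : i ≤ n) (ht1 : 1 ≤ t) (ht2 : t ≤ i - 2 * m - 1)
    (x : ℕ → Finset D)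
    (hx : ∀ j : ℕ, 1 ≤ j → j ≤ i → x j ⊆ column col j ∧ (x j).card = k) :
    condEnt (SigmaMat K σn2) (ucomp col x t)
        (seg x 1 (i - m - 1) ∪ seg (ucomp col x) (t + 1) i)
        - condEnt (SigmaMat K σn2) (ucomp col x t)
            ((seg x 1 (i - m - 1) ∪ seg (ucomp col x) (t + 1) i) ∪ x (i - m))
      ≤ (k : ℝ) * ((r : ℝ) - (k : ℝ)) * Real.log (1 + ξ ^ 2 / ((σn2 / σs2) * (1 + σn2 / σs2))) :=
  corollary_unobserved_entropy_reduction_early_general r n k m col K σs2 σn2 ξ hkr hs hn hKsymm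
    hKpsd hKdiag hcolcard hdecay hsub i t hi1 hi2 ht1 ht2 x hx
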